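/- For every τ in the upper half-plane ℍ, λ(τ) ≠ 1 and λ(τ+1) = λ(τ)/(λ(τ) − 1). -/

import Mathlib

noncomputable def theta00 (τ : ℂ) : ℂ :=
  ∑' n : ℤ, Complex.exp (Real.pi * Complex.I * (n : ℂ) ^ 2 * τ)

/-- Theta constant `θ01(τ) = ∑_{n∈ℤ} (−1)ⁿ exp(πi n² τ)`. -/
noncomputable def theta01 (τ : ℂ) : ℂ :=
  ∑' n : ℤ, (-1 : ℂ) ^ n * Complex.exp (Real.pi * Complex.I * (n : ℂ) ^ 2 * τ)

/-- Theta constant `θ10(τ) = ∑_{n∈ℤ} exp(πi (n+1/2)² τ)`. -/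
noncomputable def theta10 (τ : ℂ) : ℂ :=
  ∑' n : ℤ, Complex.exp (Real.pi * Complex.I * ((n : ℂ) + 1/2) ^ 2 * τ)

/-- The lambda function `λ(τ) = θ10(τ)⁴ / θ00(τ)⁴`. -/
noncomputable def lambdaFn (τ : ℂ) : ℂ := theta10 τ ^ 4 / theta00 τ ^ 4

/-!
Under `τ ↦ τ + 1` the constants `θ00` and `θ01` are swapped and `θ10` picks up the factor
`e^{πi/4}`, so `λ(τ + 1) = -θ10⁴/θ01⁴`, while Jacobi's identity `θ00⁴ = θ01⁴ + θ10⁴` gives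
`1 - λ = θ01⁴/θ00⁴`. Both claims follow once `θ00` and `θ01` have no zeros on `ℍ`.

Jacobi's identity comes from the duplication formulas expressing `θ00²`, `θ01²`, `θ10²` through
`θ00(2τ)` and `θ10(2τ)`; these are instances of a product formula for `θ(z₁, τ) θ(z₂, τ)`, obtained
by splitting the double series over `(m, n)` according to the parity of `m + n`. For the zeros:
`θ00 θ01 = θ01(2τ)²`, so a zero of `θ01` at `τ` would give zeros at all `2ᵏτ`, whereas
`θ01(τ) = θ00(τ + 1) → 1` as `Im τ → ∞`.
-/

open Complex Real

theorem Int.bijective_sumElim_parity :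
    Function.Bijective (Sum.elim (fun q : ℤ × ℤ => (q.1 + q.2, q.1 - q.2))
      (fun q : ℤ × ℤ => (q.1 + q.2 + 1, q.1 - q.2))) := by
  constructor
  · rintro (⟨a, b⟩ | ⟨a, b⟩) (⟨c, d⟩ | ⟨c, d⟩) h <;>
      simp only [Sum.elim_inl, Sum.elim_inr, Prod.mk.injEq, Sum.inl.injEq, Sum.inr.injEq,
        reduceCtorEq] at h ⊢ <;> omega
  · rintro ⟨m, n⟩
    rcases Int.even_or_odd (m + n) with ⟨k, hk⟩ | ⟨k, hk⟩
    · exact ⟨.inl (k, m - k), by simp only [Sum.elim_inl, Prod.mk.injEq]; omega⟩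
    · exact ⟨.inr (k, m - k - 1), by simp only [Sum.elim_inr, Prod.mk.injEq]; omega⟩

theorem Int.tsum_prod_eq_tsum_add_tsum {E : Type*} [NormedAddCommGroup E] [CompleteSpace E]
    {F : ℤ × ℤ → E} (hF : Summable F) :
    ∑' p, F p = ∑' q : ℤ × ℤ, F (q.1 + q.2, q.1 - q.2) +
      ∑' q : ℤ × ℤ, F (q.1 + q.2 + 1, q.1 - q.2) := by
  let e := Equiv.ofBijective _ Int.bijective_sumElim_parity
  have hFe : Summable (F ∘ e) := e.summable_iff.2 hF
  rw [← e.tsum_eq]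
  exact Summable.tsum_sum (hFe.comp_injective Sum.inl_injective)
    (hFe.comp_injective Sum.inr_injective)

theorem summable_norm_jacobiTheta₂_term (z : ℂ) {τ : ℂ} (hτ : 0 < τ.im) :
    Summable fun n : ℤ => ‖jacobiTheta₂_term n z τ‖ :=
  summable_norm_iff.2 ((summable_jacobiTheta₂_term_iff z τ).2 hτ)

theorem jacobiTheta₂_term_add_mul_term_sub (a b : ℤ) (z₁ z₂ τ : ℂ) :
    jacobiTheta₂_term (a + b) z₁ τ * jacobiTheta₂_term (a - b) z₂ τ =
      jacobiTheta₂_term a (z₁ + z₂) (2 * τ) * jacobiTheta₂_term b (z₁ - z₂) (2 * τ) := by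
  simp only [jacobiTheta₂_term, ← Complex.exp_add]
  congr 1
  push_cast
  ring

theorem jacobiTheta₂_term_add_add_one_mul_term_sub (a b : ℤ) (z₁ z₂ τ : ℂ) :
    jacobiTheta₂_term (a + b + 1) z₁ τ * jacobiTheta₂_term (a - b) z₂ τ =
      cexp (2 * π * I * z₁ + π * I * τ) * (jacobiTheta₂_term a (z₁ + z₂ + τ) (2 * τ) *
        jacobiTheta₂_term b (z₁ - z₂ + τ) (2 * τ)) := by
  simp only [jacobiTheta₂_term, ← Complex.exp_add]
  congr 1
  push_cast
  ring

theorem jacobiTheta₂_mul_jacobiTheta₂ (z₁ z₂ : ℂ) {τ : ℂ} (hτ : 0 < τ.im) :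
    jacobiTheta₂ z₁ τ * jacobiTheta₂ z₂ τ =
      jacobiTheta₂ (z₁ + z₂) (2 * τ) * jacobiTheta₂ (z₁ - z₂) (2 * τ) +
        cexp (2 * π * I * z₁ + π * I * τ) *
          (jacobiTheta₂ (z₁ + z₂ + τ) (2 * τ) * jacobiTheta₂ (z₁ - z₂ + τ) (2 * τ)) := by
  have h2τ : 0 < (2 * τ).im := by simpa using hτ
  have hs := summable_norm_jacobiTheta₂_term (τ := τ)
  have hs₂ := summable_norm_jacobiTheta₂_term (τ := 2 * τ)
  have hprod := summable_mul_of_summable_norm (hs z₁ hτ) (hs z₂ hτ)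
  have hsplit := Int.tsum_prod_eq_tsum_add_tsum hprod
  beta_reduce at hsplit
  unfold jacobiTheta₂
  rw [tsum_mul_tsum_of_summable_norm (hs z₁ hτ) (hs z₂ hτ), hsplit,
    tsum_mul_tsum_of_summable_norm (hs₂ _ h2τ) (hs₂ _ h2τ),
    tsum_mul_tsum_of_summable_norm (hs₂ _ h2τ) (hs₂ _ h2τ), ← tsum_mul_left]
  congr 1 <;> refine tsum_congr fun q => ?_
  · exact jacobiTheta₂_term_add_mul_term_sub q.1 q.2 z₁ z₂ τ
  · exact jacobiTheta₂_term_add_add_one_mul_term_sub q.1 q.2 z₁ z₂ τ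

theorem jacobiTheta₂_add_one_right (z τ : ℂ) :
    jacobiTheta₂ z (τ + 1) = jacobiTheta₂ (z + 1 / 2) τ := by
  refine tsum_congr fun n => ?_
  obtain ⟨k, hk⟩ := Int.even_mul_pred_self n
  have : 2 * π * I * n * z + π * I * n ^ 2 * (τ + 1) =
      2 * π * I * n * (z + 1 / 2) + π * I * n ^ 2 * τ + k * (2 * π * I) := by
    have hk' : (n : ℂ) * (n - 1) = k + k := by exact_mod_cast hk
    linear_combination π * I * hk'
  rw [jacobiTheta₂_term, jacobiTheta₂_term, this, Complex.exp_add, exp_int_mul_two_pi_mul_I,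
    mul_one]

theorem jacobiTheta₂_add_one_div_two_eq_zero (τ : ℂ) : jacobiTheta₂ ((τ + 1) / 2) τ = 0 := by
  set w := (τ + 1) / 2
  have h : jacobiTheta₂ w τ = -jacobiTheta₂ w τ := calc
    jacobiTheta₂ w τ = jacobiTheta₂ (-w + τ) τ := by
      rw [← jacobiTheta₂_add_left (-w + τ)]; congr 1; ring
    _ = cexp (π * I) * jacobiTheta₂ w τ := by
      rw [jacobiTheta₂_add_left', jacobiTheta₂_neg_left]; congr 2; ring
    _ = -jacobiTheta₂ w τ := by rw [exp_pi_mul_I, neg_one_mul]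
  exact CharZero.eq_neg_self_iff.1 h

theorem theta00_eq_jacobiTheta₂ (τ : ℂ) : theta00 τ = jacobiTheta₂ 0 τ :=
  jacobiTheta_eq_jacobiTheta₂ τ

theorem theta01_eq_jacobiTheta₂ (τ : ℂ) : theta01 τ = jacobiTheta₂ (1 / 2) τ := by
  refine tsum_congr fun n => ?_
  rw [jacobiTheta₂_term, Complex.exp_add, ← exp_pi_mul_I, ← exp_int_mul]
  congr 2
  ring

theorem theta10_eq_jacobiTheta₂ (τ : ℂ) :
    theta10 τ = cexp (π * I * τ / 4) * jacobiTheta₂ (τ / 2) τ := by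
  rw [jacobiTheta₂, ← tsum_mul_left]
  refine tsum_congr fun n => ?_
  rw [jacobiTheta₂_term, ← Complex.exp_add]
  congr 1
  ring

theorem theta00_add_one (τ : ℂ) : theta00 (τ + 1) = theta01 τ := by
  rw [theta00_eq_jacobiTheta₂, theta01_eq_jacobiTheta₂, jacobiTheta₂_add_one_right, zero_add]

theorem theta01_add_one (τ : ℂ) : theta01 (τ + 1) = theta00 τ := by
  rw [theta00_eq_jacobiTheta₂, theta01_eq_jacobiTheta₂, jacobiTheta₂_add_one_right,
    show (1 / 2 + 1 / 2 : ℂ) = 0 + 1 by norm_num, jacobiTheta₂_add_left]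

theorem theta10_add_one (τ : ℂ) : theta10 (τ + 1) = cexp (π * I / 4) * theta10 τ := by
  rw [theta10_eq_jacobiTheta₂, theta10_eq_jacobiTheta₂, jacobiTheta₂_add_one_right,
    show (τ + 1) / 2 + 1 / 2 = τ / 2 + 1 by ring, jacobiTheta₂_add_left, ← mul_assoc,
    ← Complex.exp_add]
  congr 2
  ring

theorem theta00_sq {τ : ℂ} (hτ : 0 < τ.im) :
    theta00 τ ^ 2 = theta00 (2 * τ) ^ 2 + theta10 (2 * τ) ^ 2 := by
  have hexp : cexp (π * I * (2 * τ) / 4) ^ 2 = cexp (π * I * τ) := by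
    rw [← Complex.exp_nat_mul]; congr 1; push_cast; ring
  rw [theta00_eq_jacobiTheta₂, theta00_eq_jacobiTheta₂, theta10_eq_jacobiTheta₂, sq,
    jacobiTheta₂_mul_jacobiTheta₂ 0 0 hτ, mul_div_cancel_left₀ τ two_ne_zero]
  simp only [add_zero, sub_zero, zero_add, mul_zero]
  linear_combination (-jacobiTheta₂ τ (2 * τ) ^ 2) * hexp

theorem theta01_sq {τ : ℂ} (hτ : 0 < τ.im) :
    theta01 τ ^ 2 = theta00 (2 * τ) ^ 2 - theta10 (2 * τ) ^ 2 := by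
  have hexp : cexp (π * I * (2 * τ) / 4) ^ 2 = cexp (π * I * τ) := by
    rw [← Complex.exp_nat_mul]; congr 1; push_cast; ring
  have hexp' : cexp (2 * π * I * (1 / 2) + π * I * τ) = -cexp (π * I * τ) := by
    rw [Complex.exp_add, show 2 * π * I * (1 / 2 : ℂ) = π * I by ring, exp_pi_mul_I, neg_one_mul]
  rw [theta00_eq_jacobiTheta₂, theta01_eq_jacobiTheta₂, theta10_eq_jacobiTheta₂, sq,
    jacobiTheta₂_mul_jacobiTheta₂ _ _ hτ, mul_div_cancel_left₀ τ two_ne_zero, sub_self,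
    zero_add, show (1 / 2 + 1 / 2 : ℂ) = 0 + 1 by norm_num, add_assoc, add_comm 1 τ, ← add_assoc,
    jacobiTheta₂_add_left, jacobiTheta₂_add_left, zero_add, hexp']
  linear_combination jacobiTheta₂ τ (2 * τ) ^ 2 * hexp

theorem theta10_sq {τ : ℂ} (hτ : 0 < τ.im) :
    theta10 τ ^ 2 = 2 * theta00 (2 * τ) * theta10 (2 * τ) := by
  have hexp : cexp (π * I * τ / 4) ^ 2 = cexp (π * I * (2 * τ) / 4) := by
    rw [← Complex.exp_nat_mul]; congr 1; push_cast; ring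
  have hexp' : cexp (2 * π * I * (τ / 2) + π * I * τ) * cexp (-π * I * (2 * τ + 2 * 0)) = 1 := by
    rw [← Complex.exp_add, ← Complex.exp_zero]; congr 1; ring
  rw [theta00_eq_jacobiTheta₂, theta10_eq_jacobiTheta₂, theta10_eq_jacobiTheta₂, mul_pow,
    sq (jacobiTheta₂ _ _), jacobiTheta₂_mul_jacobiTheta₂ _ _ hτ, mul_div_cancel_left₀ τ two_ne_zero,
    sub_self, zero_add, add_halves, show τ + τ = 0 + 2 * τ by ring, jacobiTheta₂_add_left']
  linear_combination (jacobiTheta₂ 0 (2 * τ) * jacobiTheta₂ τ (2 * τ)) *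
    (2 * hexp + cexp (π * I * τ / 4) ^ 2 * hexp')

theorem theta00_mul_theta01 {τ : ℂ} (hτ : 0 < τ.im) :
    theta00 τ * theta01 τ = theta01 (2 * τ) ^ 2 := by
  rw [theta00_eq_jacobiTheta₂, theta01_eq_jacobiTheta₂, theta01_eq_jacobiTheta₂,
    jacobiTheta₂_mul_jacobiTheta₂ _ _ hτ, zero_add, zero_sub, jacobiTheta₂_neg_left,
    show 1 / 2 + τ = (2 * τ + 1) / 2 by ring, jacobiTheta₂_add_one_div_two_eq_zero]
  ring

theorem theta00_pow_four {τ : ℂ} (hτ : 0 < τ.im) :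
    theta00 τ ^ 4 = theta01 τ ^ 4 + theta10 τ ^ 4 := by
  linear_combination (theta00 τ ^ 2 + theta00 (2 * τ) ^ 2 + theta10 (2 * τ) ^ 2) * theta00_sq hτ -
    (theta01 τ ^ 2 + theta00 (2 * τ) ^ 2 - theta10 (2 * τ) ^ 2) * theta01_sq hτ -
    (theta10 τ ^ 2 + 2 * theta00 (2 * τ) * theta10 (2 * τ)) * theta10_sq hτ

theorem jacobiTheta_ne_zero_of_one_le_im {τ : ℂ} (hτ : 1 ≤ τ.im) : jacobiTheta τ ≠ 0 := by
  set r := rexp (-π * τ.im)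
  have hr : r < 1 / 3 := calc
    r ≤ rexp (-3) := Real.exp_le_exp.2 (by nlinarith [pi_gt_three])
    _ < 1 / 3 := by
      rw [Real.exp_neg, one_div, inv_lt_inv₀ (Real.exp_pos 3) three_pos]
      linarith [Real.add_one_le_exp 3]
  have hbound : 2 / (1 - r) * r < 1 := by
    rw [div_mul_eq_mul_div, div_lt_one (by linarith)]
    linarith
  intro h
  have := norm_jacobiTheta_sub_one_le (by linarith : 0 < τ.im)
  rw [h, zero_sub, norm_neg, norm_one] at this
  linarith

theorem Complex.im_two_pow_mul (k : ℕ) (τ : ℂ) : (2 ^ k * τ).im = 2 ^ k * τ.im := by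
  simp [← Complex.ofReal_ofNat, ← Complex.ofReal_pow]

theorem theta01_two_pow_mul_eq_zero {τ : ℂ} (hτ : 0 < τ.im) (h : theta01 τ = 0) (k : ℕ) :
    theta01 (2 ^ k * τ) = 0 := by
  induction k with
  | zero => simpa using h
  | succ k ih =>
    have hk : 0 < (2 ^ k * τ).im := by rw [im_two_pow_mul]; positivity
    rw [pow_succ', mul_assoc]
    exact pow_eq_zero_iff two_ne_zero |>.1 (by rw [← theta00_mul_theta01 hk, ih, mul_zero])

theorem theta01_ne_zero {τ : ℂ} (hτ : 0 < τ.im) : theta01 τ ≠ 0 := by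
  intro h
  obtain ⟨k, hk⟩ := pow_unbounded_of_one_lt τ.im⁻¹ one_lt_two
  have him : 1 ≤ (2 ^ k * τ + 1).im := by
    rw [add_im, one_im, add_zero, im_two_pow_mul]
    exact ((inv_lt_iff_one_lt_mul₀ hτ).1 hk).le
  exact jacobiTheta_ne_zero_of_one_le_im him
    ((theta00_add_one _).trans (theta01_two_pow_mul_eq_zero hτ h k))

theorem theta00_ne_zero {τ : ℂ} (hτ : 0 < τ.im) : theta00 τ ≠ 0 := by
  rw [← theta01_add_one]
  exact theta01_ne_zero (by simpa using hτ)

theorem lambdaFn_add_one (τ : ℂ) : lambdaFn (τ + 1) = -(theta10 τ ^ 4 / theta01 τ ^ 4) := by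
  have hexp : cexp (π * I / 4) ^ 4 = -1 := by
    rw [← Complex.exp_nat_mul, ← exp_pi_mul_I]; congr 1; push_cast; ring
  rw [lambdaFn, theta10_add_one, theta00_add_one, mul_pow, hexp]
  ring

theorem one_sub_lambdaFn {τ : ℂ} (hτ : 0 < τ.im) :
    1 - lambdaFn τ = theta01 τ ^ 4 / theta00 τ ^ 4 := by
  rw [lambdaFn, eq_div_iff (pow_ne_zero 4 (theta00_ne_zero hτ)), sub_mul, one_mul,
    div_mul_cancel₀ _ (pow_ne_zero 4 (theta00_ne_zero hτ)), theta00_pow_four hτ]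
  ring

/-- `λ(τ) ≠ 1` and `λ(τ+1) = λ(τ)/(λ(τ)−1)` on the upper half-plane. -/
theorem lambda_T_action (τ : ℂ) (hτ : 0 < τ.im) :
    lambdaFn τ ≠ 1 ∧ lambdaFn (τ + 1) = lambdaFn τ / (lambdaFn τ - 1) := by
  have h00 := pow_ne_zero 4 (theta00_ne_zero hτ)
  have h01 := pow_ne_zero 4 (theta01_ne_zero hτ)
  have hlam := one_sub_lambdaFn hτ
  refine ⟨fun h => ?_, ?_⟩
  · rw [h, sub_self] at hlam
    exact div_ne_zero h01 h00 hlam.symm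
  · rw [lambdaFn_add_one, ← neg_sub, div_neg, hlam, lambdaFn, div_div_div_cancel_right₀ h00]
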